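/- Let G be a finite simple connected graph with n vertices and let 0 < p ≤ 1. Then ‖M_G‖_p = (1 + (n-1)/2^p)^{1/p} if and only if G is isomorphic to the star graph S_n. -/

import Mathlib

/-!
Writing `f = ∑ w, f w • kdelta w`, sublinearity of the maximal operator gives
`M f ≤ ∑ w, |f w| * M (kdelta w)` pointwise, and for `p ≤ 1` the `p`-th power is subadditive,
so `‖M f‖_p^p ≤ (max_w ‖M (kdelta w)‖_p^p) * ‖f‖_p^p`: the operator norm is attained at a
Kronecker delta. The smallest ball around `v` that meets `w` is `B(v, d(v, w))`, so
`M (kdelta w) v = 1 / |B(v, d(v, w))|`; for `v ≠ w` this ball contains `v` and `w`, whence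
`‖M (kdelta w)‖_p^p ≤ 1 + (n - 1) / 2^p`, with equality iff every such ball is `{v, w}`, i.e. iff
`w` is the only neighbour of every other vertex: `G` is the star centred at `w`.
-/

open scoped Classical
open Finset

noncomputable section

variable {V : Type*} [Fintype V]

/-- metric ball of radius `r` centered at `v` in the graph `G` -/
def gBall (G : SimpleGraph V) (v : V) (r : ℕ) : Finset V :=
  Finset.univ.filter fun w => G.dist v w ≤ r

/-- Hardy–Littlewood maximal operator on the graph `G` -/
def maxOp (G : SimpleGraph V) (f : V → ℝ) (v : V) : ℝ :=
  ⨆ k : Fin (Fintype.card V), (∑ w ∈ gBall G v k.1, |f w|) / ((gBall G v k.1).card : ℝ)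

/-- ℓ^p (quasi)norm of a function on the vertices -/
def pNorm (p : ℝ) (f : V → ℝ) : ℝ := (∑ v, |f v| ^ p) ^ (1 / p)

/-- operator (quasi)norm of the maximal operator of `G` on ℓ^p -/
def opNorm (G : SimpleGraph V) (p : ℝ) : ℝ :=
  ⨆ f : {f : V → ℝ // f ≠ 0}, pNorm p (maxOp G f.1) / pNorm p f.1

/-- weak ℓ^p norm -/
def wNorm (p : ℝ) (f : V → ℝ) : ℝ :=
  ⨆ t : {t : ℝ // 0 < t},
    t.1 * ((Finset.univ.filter fun v => t.1 < |f v|).card : ℝ) ^ (1 / p)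

/-- weak-type operator norm of the maximal operator of `G` -/
def wOpNorm (G : SimpleGraph V) (p : ℝ) : ℝ :=
  ⨆ f : {f : V → ℝ // f ≠ 0}, wNorm p (maxOp G f.1) / pNorm p f.1

/-- maximal operator over all graphs on `V` isomorphic to `G` -/
def maxOpIso (G : SimpleGraph V) (f : V → ℝ) (j : V) : ℝ :=
  ⨆ H : {H : SimpleGraph V // Nonempty (H ≃g G)}, maxOp H.1 f j

/-- operator norm of `maxOpIso` on ℓ^p -/
def opNormIso (G : SimpleGraph V) (p : ℝ) : ℝ :=
  ⨆ f : {f : V → ℝ // f ≠ 0}, pNorm p (maxOpIso G f.1) / pNorm p f.1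

/-- Kronecker delta at `k` -/
def kdelta (k : V) : V → ℝ := fun j => if j = k then 1 else 0

/-- star graph on `Fin n` with center `0` -/
def starGraph (n : ℕ) : SimpleGraph (Fin n) :=
  SimpleGraph.fromRel fun i _ => i.1 = 0

/-- diameter of a graph -/
def gDiam (G : SimpleGraph V) : ℕ :=
  Finset.univ.sup fun p : V × V => G.dist p.1 p.2

/-- dilation index of a graph -/
def dilIndex (G : SimpleGraph V) : ℝ :=
  ⨆ x : V, ⨆ r : {r : ℕ // r ≤ gDiam G},
    ((gBall G x (3 * r.1)).card : ℝ) / ((gBall G x r.1).card : ℝ)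

/-- overlapping index of a graph -/
def overlapIndex (G : SimpleGraph V) : ℕ :=
  sInf { r : ℕ | ∀ J : Finset (V × ℕ), ∃ I ⊆ J,
    J.biUnion (fun j => gBall G j.1 j.2) = I.biUnion (fun i => gBall G i.1 i.2) ∧
    ∀ v : V, (I.filter fun i => v ∈ gBall G i.1 i.2).card ≤ r }

section Balls

variable {G : SimpleGraph V} {v w : V} {r s : ℕ}

lemma mem_gBall : w ∈ gBall G v r ↔ G.dist v w ≤ r := by
  simp [gBall]

lemma mem_gBall_self : v ∈ gBall G v r :=
  mem_gBall.2 (by simp)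

lemma mem_gBall_dist : w ∈ gBall G v (G.dist v w) :=
  mem_gBall.2 le_rfl

lemma gBall_mono (h : r ≤ s) : gBall G v r ⊆ gBall G v s :=
  fun _ hw => mem_gBall.2 ((mem_gBall.1 hw).trans h)

lemma card_gBall_pos : 0 < #(gBall G v r) :=
  card_pos.2 ⟨v, mem_gBall_self⟩

lemma SimpleGraph.dist_lt_card (v w : V) : G.dist v w < Fintype.card V := by
  by_cases h : G.Reachable v w
  · obtain ⟨q, hq, hlen⟩ := h.exists_path_of_dist
    exact hlen ▸ hq.length_lt
  · rw [SimpleGraph.dist_eq_zero_of_not_reachable h]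
    exact Fintype.card_pos_iff.2 ⟨v⟩

lemma SimpleGraph.Connected.gBall_zero (hG : G.Connected) (v : V) : gBall G v 0 = {v} := by
  ext w
  rw [mem_gBall, Nat.le_zero, hG.dist_eq_zero_iff, mem_singleton, eq_comm]

end Balls

section MaximalOperator

variable {G : SimpleGraph V} {v w : V} {f : V → ℝ}

def ballAvg (G : SimpleGraph V) (f : V → ℝ) (v : V) (r : ℕ) : ℝ :=
  (∑ u ∈ gBall G v r, |f u|) / #(gBall G v r)

lemma ballAvg_nonneg (r : ℕ) : 0 ≤ ballAvg G f v r := by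
  unfold ballAvg; positivity

lemma ballAvg_le_maxOp {r : ℕ} (hr : r < Fintype.card V) : ballAvg G f v r ≤ maxOp G f v :=
  le_ciSup (f := fun k : Fin (Fintype.card V) => ballAvg G f v k) (Set.finite_range _).bddAbove
    ⟨r, hr⟩

lemma maxOp_le {C : ℝ} (h : ∀ r < Fintype.card V, ballAvg G f v r ≤ C) : maxOp G f v ≤ C :=
  have : Nonempty (Fin (Fintype.card V)) := ⟨⟨0, Fintype.card_pos_iff.2 ⟨v⟩⟩⟩
  ciSup_le fun k => h k k.2

lemma maxOp_nonneg : 0 ≤ maxOp G f v :=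
  (ballAvg_nonneg 0).trans (ballAvg_le_maxOp (Fintype.card_pos_iff.2 ⟨v⟩))

lemma ballAvg_kdelta (r : ℕ) :
    ballAvg G (kdelta w) v r = if w ∈ gBall G v r then (#(gBall G v r) : ℝ)⁻¹ else 0 := by
  unfold ballAvg kdelta
  split_ifs <;> simp [apply_ite, *]

lemma maxOp_kdelta : maxOp G (kdelta w) v = (#(gBall G v (G.dist v w)) : ℝ)⁻¹ := by
  refine le_antisymm (maxOp_le fun r _ => ?_) ?_
  · rw [ballAvg_kdelta]
    split_ifs with hw
    · gcongr
      · exact_mod_cast card_gBall_pos (G := G)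
      · exact gBall_mono (mem_gBall.1 hw)
    · positivity
  · simpa [ballAvg_kdelta, mem_gBall_dist] using
      ballAvg_le_maxOp (G := G) (v := v) (f := kdelta w) (G.dist_lt_card v w)

lemma ballAvg_eq_sum_mul_ballAvg_kdelta (r : ℕ) :
    ballAvg G f v r = ∑ w, |f w| * ballAvg G (kdelta w) v r := by
  simp_rw [ballAvg_kdelta, mul_ite, mul_zero, ← sum_filter, ballAvg, div_eq_mul_inv, ← sum_mul]
  simp [gBall]

lemma maxOp_le_sum_mul_maxOp_kdelta : maxOp G f v ≤ ∑ w, |f w| * maxOp G (kdelta w) v :=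
  maxOp_le fun r hr => (ballAvg_eq_sum_mul_ballAvg_kdelta r).trans_le <|
    sum_le_sum fun _ _ => mul_le_mul_of_nonneg_left (ballAvg_le_maxOp hr) (abs_nonneg _)

end MaximalOperator

section QuasiNorm

variable {ι : Type*} {p : ℝ}

lemma Real.rpow_sum_le_sum_rpow (s : Finset ι) {a : ι → ℝ} (ha : ∀ i ∈ s, 0 ≤ a i)
    (hp0 : 0 < p) (hp1 : p ≤ 1) : (∑ i ∈ s, a i) ^ p ≤ ∑ i ∈ s, a i ^ p :=
  le_sum_of_subadditive_on_pred (· ^ p) (0 ≤ ·) (by simp [Real.zero_rpow hp0.ne'])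
    (fun _ _ hx hy => Real.rpow_add_le_add_rpow hx hy hp0.le hp1) (fun _ _ => add_nonneg) a ha

lemma sum_abs_rpow_le_of_abs_le_sum [Fintype ι] (hp0 : 0 < p) (hp1 : p ≤ 1) {u : V → ℝ}
    {c : ι → ℝ} {g : ι → V → ℝ} (hc : ∀ i, 0 ≤ c i) (h : ∀ v, |u v| ≤ ∑ i, c i * |g i v|) :
    ∑ v, |u v| ^ p ≤ ∑ i, c i ^ p * ∑ v, |g i v| ^ p :=
  calc ∑ v, |u v| ^ p
      ≤ ∑ v, ∑ i, (c i * |g i v|) ^ p := sum_le_sum fun v _ =>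
        (Real.rpow_le_rpow (abs_nonneg _) (h v) hp0.le).trans
          (Real.rpow_sum_le_sum_rpow _ (fun i _ => mul_nonneg (hc i) (abs_nonneg _)) hp0 hp1)
    _ = ∑ i, c i ^ p * ∑ v, |g i v| ^ p := by
      simp_rw [Real.mul_rpow (hc _) (abs_nonneg _), mul_sum]
      exact sum_comm

variable {f : V → ℝ} {w : V}

lemma pNorm_nonneg : 0 ≤ pNorm p f := by
  unfold pNorm; positivity

lemma pNorm_rpow (hp : p ≠ 0) : pNorm p f ^ p = ∑ v, |f v| ^ p := by
  rw [pNorm, ← Real.rpow_mul (by positivity), one_div_mul_cancel hp, Real.rpow_one]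

lemma pNorm_pos (hf : f ≠ 0) : 0 < pNorm p f := by
  obtain ⟨v, hv⟩ := Function.ne_iff.1 hf
  refine Real.rpow_pos_of_pos (sum_pos' (fun _ _ => by positivity) ⟨v, mem_univ v, ?_⟩) _
  exact Real.rpow_pos_of_pos (abs_pos.2 hv) _

lemma kdelta_ne_zero {α : Type*} (a : α) : kdelta a ≠ 0 :=
  Function.ne_iff.2 ⟨a, by simp [kdelta]⟩

lemma pNorm_kdelta (hp : 0 < p) : pNorm p (kdelta w) = 1 := by
  simp [pNorm, kdelta, apply_ite, Real.zero_rpow hp.ne']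

end QuasiNorm

section OperatorNorm

variable {G : SimpleGraph V} {p : ℝ}

lemma pNorm_maxOp_le [Nonempty V] (hp0 : 0 < p) (hp1 : p ≤ 1) {K : ℝ}
    (hK : ∀ w, pNorm p (maxOp G (kdelta w)) ≤ K) (f : V → ℝ) :
    pNorm p (maxOp G f) ≤ K * pNorm p f := by
  have hK0 : 0 ≤ K := pNorm_nonneg.trans (hK (Classical.arbitrary V))
  rw [← Real.rpow_le_rpow_iff pNorm_nonneg (mul_nonneg hK0 pNorm_nonneg) hp0,
    Real.mul_rpow hK0 pNorm_nonneg, pNorm_rpow hp0.ne', pNorm_rpow hp0.ne', mul_sum]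
  calc ∑ v, |maxOp G f v| ^ p
      ≤ ∑ w, |f w| ^ p * ∑ v, |maxOp G (kdelta w) v| ^ p :=
        sum_abs_rpow_le_of_abs_le_sum hp0 hp1 (fun _ => abs_nonneg _) fun v => by
          simpa only [abs_of_nonneg maxOp_nonneg] using maxOp_le_sum_mul_maxOp_kdelta
    _ ≤ ∑ w, K ^ p * |f w| ^ p := sum_le_sum fun w _ => by
        rw [mul_comm, ← pNorm_rpow hp0.ne']
        gcongr
        · exact pNorm_nonneg
        · exact hK w

lemma opNorm_eq_pNorm_maxOp_kdelta (hp0 : 0 < p) (hp1 : p ≤ 1) {w : V}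
    (hw : ∀ w', pNorm p (maxOp G (kdelta w')) ≤ pNorm p (maxOp G (kdelta w))) :
    opNorm G p = pNorm p (maxOp G (kdelta w)) := by
  have : Nonempty V := ⟨w⟩
  have : Nonempty {f : V → ℝ // f ≠ 0} := ⟨⟨kdelta w, kdelta_ne_zero w⟩⟩
  have hbound (f : {f : V → ℝ // f ≠ 0}) :
      pNorm p (maxOp G f.1) / pNorm p f.1 ≤ pNorm p (maxOp G (kdelta w)) :=
    (div_le_iff₀ (pNorm_pos f.2)).2 (pNorm_maxOp_le hp0 hp1 hw f.1)
  refine le_antisymm (ciSup_le hbound) ?_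
  unfold opNorm
  simpa [pNorm_kdelta hp0] using
    le_ciSup ⟨_, Set.forall_mem_range.2 hbound⟩ (⟨kdelta w, kdelta_ne_zero w⟩ : {f : V → ℝ // f ≠ 0})

end OperatorNorm

section Star

variable {α : Type*}

def starAt (c : α) : SimpleGraph α :=
  SimpleGraph.fromRel fun a _ => a = c

lemma starAt_adj {c a b : α} : (starAt c).Adj a b ↔ a ≠ b ∧ (a = c ∨ b = c) :=
  SimpleGraph.fromRel_adj _ a b

lemma starGraph_eq_starAt {n : ℕ} (hn : 0 < n) : starGraph n = starAt ⟨0, hn⟩ := by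
  ext a b
  simp [starGraph, starAt, Fin.ext_iff]

lemma nonempty_iso_starAt_iff {G : SimpleGraph α} {c : α} :
    Nonempty (G ≃g starAt c) ↔ ∃ w, G = starAt w := by
  constructor
  · rintro ⟨φ⟩
    refine ⟨φ.symm c, ?_⟩
    ext a b
    rw [← φ.map_rel_iff, starAt_adj, starAt_adj, φ.injective.ne_iff, φ.eq_symm_apply,
      φ.eq_symm_apply]
  · rintro ⟨w, rfl⟩
    exact ⟨⟨Equiv.swap w c, by simp [starAt_adj, Equiv.swap_apply_eq_iff]⟩⟩

lemma eq_starAt_iff {G : SimpleGraph α} {w : α} :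
    G = starAt w ↔ ∀ v ≠ w, ∀ u, G.Adj v u ↔ u = w := by
  constructor
  · rintro rfl v hv u
    rw [starAt_adj]
    grind
  · intro h
    ext a b
    rw [starAt_adj]
    by_cases ha : a = w
    · by_cases hb : b = w
      · simp [ha, hb]
      · rw [G.adj_comm, h b hb]
        grind
    · rw [h a ha]
      grind

end Star

section StarExtremal

variable {G : SimpleGraph V} {v w : V} {p : ℝ}

lemma pair_subset_gBall_dist : {v, w} ⊆ gBall G v (G.dist v w) := by
  simp [insert_subset_iff, mem_gBall_self, mem_gBall_dist]

lemma card_gBall_dist_eq_two_iff (hG : G.Connected) (hvw : v ≠ w) :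
    #(gBall G v (G.dist v w)) = 2 ↔ ∀ u, G.Adj v u ↔ u = w := by
  rw [← card_pair_eq_two_iff.2 hvw]
  constructor
  · intro hcard
    have hball := (eq_of_subset_of_card_le pair_subset_gBall_dist hcard.le).symm
    have hnbr (u : V) (hu : G.Adj v u) : u = w := by
      have hmem : u ∈ gBall G v (G.dist v w) := mem_gBall.2 <|
        (SimpleGraph.dist_eq_one_iff_adj.2 hu).trans_le (hG.pos_dist_of_ne hvw)
      rw [hball, mem_insert, mem_singleton] at hmem
      exact hmem.resolve_left (G.ne_of_adj hu).symm
    obtain ⟨q⟩ := hG.preconnected v w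
    have hsnd := q.adj_snd (q.not_nil_of_ne hvw)
    exact fun u => ⟨hnbr u, by rintro rfl; rwa [← hnbr _ hsnd]⟩
  · intro hnbr
    have hdist : G.dist v w = 1 := SimpleGraph.dist_eq_one_iff_adj.2 ((hnbr w).2 rfl)
    refine congrArg card (Subset.antisymm (fun u hu => ?_) pair_subset_gBall_dist)
    rw [mem_gBall, hdist, Nat.le_one_iff_eq_zero_or_eq_one, hG.dist_eq_zero_iff,
      SimpleGraph.dist_eq_one_iff_adj, hnbr] at hu
    rcases hu with rfl | rfl <;> simp

lemma inv_card_gBall_dist_rpow_le (hp : 0 < p) (hvw : v ≠ w) :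
    ((#(gBall G v (G.dist v w)) : ℝ)⁻¹) ^ p ≤ (2⁻¹ : ℝ) ^ p := by
  gcongr
  exact_mod_cast (card_pair_eq_two_iff.2 hvw).symm.trans_le (card_le_card pair_subset_gBall_dist)

lemma inv_card_gBall_dist_rpow_eq_iff (hp : 0 < p) :
    ((#(gBall G v (G.dist v w)) : ℝ)⁻¹) ^ p = (2⁻¹ : ℝ) ^ p ↔ #(gBall G v (G.dist v w)) = 2 := by
  rw [Real.rpow_left_inj (by positivity) (by positivity) hp.ne', inv_inj]
  norm_cast

lemma pNorm_maxOp_kdelta_rpow (hG : G.Connected) (hp : 0 < p) (w : V) :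
    pNorm p (maxOp G (kdelta w)) ^ p
      = 1 + ∑ v ∈ univ.erase w, ((#(gBall G v (G.dist v w)) : ℝ)⁻¹) ^ p := by
  rw [pNorm_rpow hp.ne', ← add_sum_erase _ _ (mem_univ w)]
  simp [maxOp_kdelta, hG.gBall_zero]

lemma one_add_card_sub_one_div_eq_sum (w : V) :
    1 + (Fintype.card V - 1 : ℝ) / 2 ^ p = 1 + ∑ _v ∈ univ.erase w, (2⁻¹ : ℝ) ^ p := by
  rw [sum_const, card_erase_of_mem (mem_univ w), card_univ, nsmul_eq_mul,
    Nat.cast_sub (Fintype.card_pos_iff.2 ⟨w⟩), Real.inv_rpow zero_le_two, Nat.cast_one, div_eq_mul_inv]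

lemma pNorm_maxOp_kdelta_rpow_le (hG : G.Connected) (hp : 0 < p) (w : V) :
    pNorm p (maxOp G (kdelta w)) ^ p ≤ 1 + (Fintype.card V - 1 : ℝ) / 2 ^ p := by
  rw [pNorm_maxOp_kdelta_rpow hG hp, one_add_card_sub_one_div_eq_sum w]
  exact add_le_add_right
    (sum_le_sum fun v hv => inv_card_gBall_dist_rpow_le hp (ne_of_mem_erase hv)) 1

lemma pNorm_maxOp_kdelta_rpow_eq_iff (hG : G.Connected) (hp : 0 < p) (w : V) :
    pNorm p (maxOp G (kdelta w)) ^ p = 1 + (Fintype.card V - 1 : ℝ) / 2 ^ p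
      ↔ G = starAt w := by
  rw [pNorm_maxOp_kdelta_rpow hG hp, one_add_card_sub_one_div_eq_sum w, add_right_inj,
    sum_eq_sum_iff_of_le fun v hv => inv_card_gBall_dist_rpow_le hp (ne_of_mem_erase hv),
    eq_starAt_iff]
  simp only [mem_erase, mem_univ, and_true]
  exact forall₂_congr fun v hvw =>
    (inv_card_gBall_dist_rpow_eq_iff hp).trans (card_gBall_dist_eq_two_iff hG hvw)

end StarExtremal

/-- the upper bound is attained exactly by graphs isomorphic to
the star. -/
theorem stmt10 (n : ℕ) (G : SimpleGraph (Fin n)) (hG : G.Connected)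
    (p : ℝ) (hp0 : 0 < p) (hp1 : p ≤ 1) :
    opNorm G p = (1 + ((n : ℝ) - 1) / 2 ^ p) ^ (1 / p)
      ↔ Nonempty (G ≃g starGraph n) := by
  have : Nonempty (Fin n) := hG.nonempty
  have hn : 0 < n := Fin.pos (Classical.arbitrary _)
  have hle (w : Fin n) := pNorm_maxOp_kdelta_rpow_le hG hp0 w
  have heq (w : Fin n) := pNorm_maxOp_kdelta_rpow_eq_iff hG hp0 w
  simp only [Fintype.card_fin] at hle heq
  obtain ⟨w₀, hw₀⟩ := Finite.exists_max fun w => pNorm p (maxOp G (kdelta w))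
  rw [opNorm_eq_pNorm_maxOp_kdelta hp0 hp1 hw₀, one_div,
    Real.eq_rpow_inv pNorm_nonneg ((Real.rpow_nonneg pNorm_nonneg p).trans (hle w₀)) hp0.ne',
    starGraph_eq_starAt hn, nonempty_iso_starAt_iff]
  refine ⟨fun h => ⟨w₀, (heq w₀).1 h⟩, fun ⟨w, hw⟩ => (hle w₀).antisymm ?_⟩
  exact (heq w).2 hw ▸ Real.rpow_le_rpow pNorm_nonneg (hw₀ w) hp0.le
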